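/- Fix a discretization as in the context, fix q̂ ∈ {0,…,N_φ−1}, and let g_{q̂}(φ,s) = (1/|Φ_{q̂}|) if φ ∈ Φ_{q̂} and s ∈ (−1,1), and g_{q̂}(φ,s) = 0 otherwise. Then (R* g_{q̂})(x) = 1 for all x ∈ Ω, and for every i,j ∈ {0,…,N_x−1} with |x_ij·θ_{φ_{q̂}}| ≤ 1 − δ_s/2 and every x in the interior of X_ij, the pixel-driven backprojection is exact: (R^pd* g_{q̂})(x) = 1. -/

import Mathlib

open MeasureTheory Real Set Filter

/-- The ray-driven weight function `w^rd(φ, t)` (for spatial resolution `δx`).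
Here `κ(φ) = min{1/|cos φ|, 1/|sin φ|}` (with `1/0 = ∞`) is expressed as
`1 / max |cos φ| |sin φ|`, which is the same real number. -/
noncomputable def rayWeight (δx φ t : ℝ) : ℝ :=
  (1 / δx) *
    (if δx / 2 * |(|Real.cos φ| - |Real.sin φ|)| ≤ |t| ∧
        |t| < δx / 2 * (|Real.cos φ| + |Real.sin φ|) then
      (δx / 2 * (|Real.cos φ| + |Real.sin φ|) - |t|) / (δx * |Real.cos φ * Real.sin φ|)
    else if |t| < δx / 2 * |(|Real.cos φ| - |Real.sin φ|)| then
      1 / max |Real.cos φ| |Real.sin φ|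
    else if (φ = 0 ∨ φ = Real.pi / 2) ∧ |t| = δx / 2 * (|Real.cos φ| + |Real.sin φ|) then
      1 / 2
    else 0)

/-- The pixel-driven weight function `w^pd(t)` (for detector resolution `δs`). -/
noncomputable def pixelWeight (δs t : ℝ) : ℝ := (1 / δs ^ 2) * max (δs - |t|) 0

/-- Spatial pixel center `x_ij` for an `Nx × Nx` grid on `[-1,1]²` (so `δ_x = 2/Nx`). -/
noncomputable def xc (Nx : ℕ) (i j : Fin Nx) : ℝ × ℝ :=
  (((i : ℝ) + 1 / 2) * (2 / (Nx : ℝ)) - 1, ((j : ℝ) + 1 / 2) * (2 / (Nx : ℝ)) - 1)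

/-- Spatial pixel `X_ij = x_ij + [-δ_x/2, δ_x/2]²`. -/
noncomputable def Xpix (Nx : ℕ) (i j : Fin Nx) : Set (ℝ × ℝ) :=
  {y | |y.1 - (xc Nx i j).1| ≤ (2 / (Nx : ℝ)) / 2 ∧ |y.2 - (xc Nx i j).2| ≤ (2 / (Nx : ℝ)) / 2}

/-- Detector pixel center `s_p = (p + 1/2) δ_s - 1` with `δ_s = 2/Ns`. -/
noncomputable def sc (Ns p : ℕ) : ℝ := ((p : ℝ) + 1 / 2) * (2 / (Ns : ℝ)) - 1

/-- Detector pixel `S_p = [s_p - δ_s/2, s_p + δ_s/2)`. -/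
noncomputable def Spix (Ns : ℕ) (p : Fin Ns) : Set ℝ :=
  Set.Ico (sc Ns p - (2 / (Ns : ℝ)) / 2) (sc Ns p + (2 / (Ns : ℝ)) / 2)

/-- The successor angle `φ_{q+1}`, with the convention `φ_{N_φ} = φ_0 + π`. -/
noncomputable def angNext {Nφ : ℕ} (ang : Fin Nφ → ℝ) (q : Fin Nφ) : ℝ :=
  if h : (q : ℕ) + 1 < Nφ then ang ⟨(q : ℕ) + 1, h⟩ else ang ⟨0, q.pos⟩ + Real.pi

/-- The predecessor angle `φ_{q-1}`, with the convention `φ_{-1} = φ_{N_φ-1} - π`. -/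
noncomputable def angPrev {Nφ : ℕ} (ang : Fin Nφ → ℝ) (q : Fin Nφ) : ℝ :=
  if (q : ℕ) = 0 then ang ⟨Nφ - 1, Nat.sub_lt q.pos Nat.one_pos⟩ - Real.pi
  else ang ⟨(q : ℕ) - 1, lt_of_le_of_lt (Nat.sub_le _ _) q.isLt⟩

/-- Left endpoint `(φ_{q-1} + φ_q)/2` of the angular pixel `Φ_q`. -/
noncomputable def phiLo {Nφ : ℕ} (ang : Fin Nφ → ℝ) (q : Fin Nφ) : ℝ :=
  (angPrev ang q + ang q) / 2

/-- Right endpoint `(φ_q + φ_{q+1})/2` of the angular pixel `Φ_q`. -/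
noncomputable def phiHi {Nφ : ℕ} (ang : Fin Nφ → ℝ) (q : Fin Nφ) : ℝ :=
  (ang q + angNext ang q) / 2

/-- The length `|Φ_q|` of the angular pixel `Φ_q`. -/
noncomputable def phiLen {Nφ : ℕ} (ang : Fin Nφ → ℝ) (q : Fin Nφ) : ℝ :=
  phiHi ang q - phiLo ang q

/-- The angular pixel `Φ_q = [(φ_{q-1}+φ_q)/2, (φ_q+φ_{q+1})/2)`, π-periodically
projected into `[0, π)`. -/
noncomputable def PhiSet {Nφ : ℕ} (ang : Fin Nφ → ℝ) (q : Fin Nφ) : Set ℝ :=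
  {φ | φ ∈ Set.Ico 0 Real.pi ∧
    ∃ k : ℤ, φ + (k : ℝ) * Real.pi ∈ Set.Ico (phiLo ang q) (phiHi ang q)}

/-- `x · θ_φ`, the projection of the point `x` onto the detector direction `θ_φ`. -/
noncomputable def proj (x : ℝ × ℝ) (φ : ℝ) : ℝ := x.1 * Real.cos φ + x.2 * Real.sin φ

/-- The spatial domain `Ω = B(0,1) ⊂ ℝ²`. -/
noncomputable def Omg : Set (ℝ × ℝ) := {x | x.1 ^ 2 + x.2 ^ 2 < 1}

/-- The sinogram domain `S = [0, π) × (-1, 1)`, with coordinates `(φ, s)`. -/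
noncomputable def Sdom : Set (ℝ × ℝ) := Set.Ico 0 Real.pi ×ˢ Set.Ioo (-1 : ℝ) 1

/-- The convolutional Radon transform `R_ω` with weight function `ω`. -/
noncomputable def convRadon (Nx Ns : ℕ) {Nφ : ℕ} (ang : Fin Nφ → ℝ)
    (ω : ℝ → ℝ → ℝ) (f : ℝ × ℝ → ℝ) (y : ℝ × ℝ) : ℝ :=
  ∑ q : Fin Nφ, ∑ p : Fin Ns,
    Set.indicator (PhiSet ang q ×ˢ Spix Ns p) (fun _ => (1 : ℝ)) y *
      ∑ i : Fin Nx, ∑ j : Fin Nx,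
        ω (ang q) (proj (xc Nx i j) (ang q) - sc Ns (p : ℕ)) * ∫ x in Xpix Nx i j, f x

/-- The convolutional backprojection `R_ω^*` with weight function `ω`. -/
noncomputable def convBack (Nx Ns : ℕ) {Nφ : ℕ} (ang : Fin Nφ → ℝ)
    (ω : ℝ → ℝ → ℝ) (g : ℝ × ℝ → ℝ) (x : ℝ × ℝ) : ℝ :=
  ∑ i : Fin Nx, ∑ j : Fin Nx,
    Set.indicator (Xpix Nx i j) (fun _ => (1 : ℝ)) x *
      ∑ q : Fin Nφ, ∑ p : Fin Ns,
        ω (ang q) (proj (xc Nx i j) (ang q) - sc Ns (p : ℕ)) *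
          ∫ z in PhiSet ang q ×ˢ Spix Ns p, g z

/-- The Radon transform `(Rf)(φ,s) = ∫ f(s θ_φ + t θ_φ^⊥) dt`, as a function of
`y = (φ, s)`. -/
noncomputable def radonT (f : ℝ × ℝ → ℝ) (y : ℝ × ℝ) : ℝ :=
  ∫ t : ℝ, f (y.2 * Real.cos y.1 - t * Real.sin y.1, y.2 * Real.sin y.1 + t * Real.cos y.1)

/-- The backprojection `(R^* g)(x) = ∫₀^π g(φ, x · θ_φ) dφ`. -/
noncomputable def radonAdj (g : ℝ × ℝ → ℝ) (x : ℝ × ℝ) : ℝ :=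
  ∫ φ in (0 : ℝ)..Real.pi, g (φ, proj x φ)

/-!
For `x ∈ Ω` we have `|x·θ_φ| < 1`, so `(R* g_q̂)(x)` is the measure of the angular pixel `Φ_q̂`
divided by `|Φ_q̂|`. These agree because `Φ_q̂ ⊆ [0, π)` is the image in `ℝ/πℤ` of the window
`[(φ_{q̂-1}+φ_q̂)/2, (φ_q̂+φ_{q̂+1})/2)`, and all these windows tile one interval of length `π`,
which is a fundamental domain of `πℤ`.

For the pixel-driven backprojection, a point of the interior of `X_ij` lies in no other spatial
pixel, and since the angular pixels are pairwise disjoint only `q = q̂` contributes, with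
`∫_{Φ_q̂ × S_p} g_q̂ = δ_s` for every `p`. What remains is `∑_p δ_s w^pd(t - s_p) = 1` for
`|t| ≤ 1 - δ_s/2`: the hats `δ_s w^pd(· - s_p)` are a partition of unity between the first and
the last detector centre.
-/

def periodize (p : ℝ) (I : Set ℝ) : Set ℝ := {x | ∃ k : ℤ, x + k * p ∈ I}

section Periodize

variable {p a : ℝ} {I J : Set ℝ}

lemma eq_zero_of_mem_Ico_of_add_mul_mem_Ico (hp : 0 < p) {x : ℝ} {k : ℤ}
    (hx : x ∈ Ico a (a + p)) (hxk : x + k * p ∈ Ico a (a + p)) : k = 0 := by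
  have hk₁ : (k : ℝ) * p < 1 * p := by linarith [hx.1, hxk.2]
  have hk₂ : (-1 : ℝ) * p < k * p := by linarith [hx.2, hxk.1]
  have h₁ : k < 1 := by exact_mod_cast lt_of_mul_lt_mul_right hk₁ hp.le
  have h₂ : -1 < k := by exact_mod_cast lt_of_mul_lt_mul_right hk₂ hp.le
  omega

lemma measurableSet_periodize (hI : MeasurableSet I) : MeasurableSet (periodize p I) := by
  have : periodize p I = ⋃ k : ℤ, (· + k * p) ⁻¹' I := by ext; simp [periodize]
  rw [this]
  exact .iUnion fun k => measurable_add_const _ hI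

lemma periodize_inter_Ico (hp : 0 < p) (hI : I ⊆ Ico a (a + p)) :
    periodize p I ∩ Ico a (a + p) = I := by
  refine Subset.antisymm ?_ fun x hx => ⟨⟨0, by simpa using hx⟩, hI hx⟩
  rintro x ⟨⟨k, hk⟩, hx⟩
  obtain rfl := eq_zero_of_mem_Ico_of_add_mul_mem_Ico hp hx (hI hk)
  simpa using hk

lemma disjoint_periodize (hp : 0 < p) (hI : I ⊆ Ico a (a + p)) (hJ : J ⊆ Ico a (a + p))
    (hIJ : Disjoint I J) : Disjoint (periodize p I) (periodize p J) := by
  rw [Set.disjoint_left]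
  rintro x ⟨k, hk⟩ ⟨l, hl⟩
  have hlk : x + k * p + ((l - k : ℤ) : ℝ) * p = x + l * p := by push_cast; ring
  rw [← hlk] at hl
  have hkl := eq_zero_of_mem_Ico_of_add_mul_mem_Ico hp (hI hk) (hJ hl)
  rw [hkl, Int.cast_zero, zero_mul, add_zero] at hl
  exact Set.disjoint_left.mp hIJ hk hl

lemma volume_Ico_inter_periodize (hp : 0 < p) (hI : MeasurableSet I) (hIa : I ⊆ Ico a (a + p)) :
    volume (Ico 0 p ∩ periodize p I) = volume I := by
  have hinv : ∀ g : AddSubgroup.zmultiples p, (g +ᵥ ·) ⁻¹' periodize p I = periodize p I := by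
    rintro ⟨_, m, rfl⟩
    ext x
    simp only [periodize, mem_preimage, AddSubgroup.vadd_def, vadd_eq_add, zsmul_eq_mul]
    constructor
    · rintro ⟨k, hk⟩; exact ⟨m + k, by push_cast; convert hk using 1; ring⟩
    · rintro ⟨k, hk⟩; exact ⟨k - m, by push_cast; convert hk using 1; ring⟩
  calc volume (Ico 0 p ∩ periodize p I)
      = volume (periodize p I ∩ Ioc 0 (0 + p)) := by
        rw [inter_comm, zero_add]; exact measure_congr (ae_eq_set_inter ae_eq_rfl Ico_ae_eq_Ioc)
    _ = volume (periodize p I ∩ Ioc a (a + p)) :=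
        (isAddFundamentalDomain_Ioc hp 0).measure_set_eq (isAddFundamentalDomain_Ioc hp a)
          (measurableSet_periodize hI) hinv
    _ = volume (periodize p I ∩ Ico a (a + p)) :=
        measure_congr (ae_eq_set_inter ae_eq_rfl Ico_ae_eq_Ioc.symm)
    _ = volume I := by rw [periodize_inter_Ico hp hIa]

end Periodize

section AngularPixels

variable {Nφ : ℕ} {ang : Fin Nφ → ℝ}

lemma angPrev_lt (hmono : StrictMono ang) (hang : ∀ q, ang q ∈ Ico 0 π) (q : Fin Nφ) :
    angPrev ang q < ang q := by
  unfold angPrev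
  split_ifs with h
  · linarith [(hang ⟨Nφ - 1, Nat.sub_lt q.pos Nat.one_pos⟩).2, (hang q).1]
  · exact hmono (Fin.lt_def.mpr (by simp only; omega))

lemma lt_angNext (hmono : StrictMono ang) (hang : ∀ q, ang q ∈ Ico 0 π) (q : Fin Nφ) :
    ang q < angNext ang q := by
  unfold angNext
  split_ifs with h
  · exact hmono (Fin.lt_def.mpr (by simp only; omega))
  · linarith [(hang q).2, (hang ⟨0, q.pos⟩).1]

lemma angNext_le_of_lt (hmono : Monotone ang) {q q' : Fin Nφ} (h : q < q') :
    angNext ang q ≤ ang q' := by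
  rw [angNext, dif_pos (lt_of_le_of_lt h q'.isLt)]
  exact hmono (Fin.le_def.mpr h)

lemma le_angPrev_of_lt (hmono : Monotone ang) {q q' : Fin Nφ} (h : q < q') :
    ang q ≤ angPrev ang q' := by
  have h' : (q : ℕ) < q' := h
  rw [angPrev, if_neg (by omega)]
  exact hmono (Fin.le_def.mpr (by simp only; omega))

lemma angNext_le (hang : ∀ q, ang q ∈ Ico 0 π) (q q₀ : Fin Nφ) (hq₀ : (q₀ : ℕ) = 0) :
    angNext ang q ≤ ang q₀ + π := by
  obtain rfl : q₀ = ⟨0, q.pos⟩ := Fin.ext hq₀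
  unfold angNext
  split_ifs with h
  · linarith [(hang ⟨q + 1, h⟩).2, (hang ⟨0, q.pos⟩).1]
  · exact le_rfl

lemma le_angPrev (hang : ∀ q, ang q ∈ Ico 0 π) (q q₁ : Fin Nφ) (hq₁ : (q₁ : ℕ) = Nφ - 1) :
    ang q₁ - π ≤ angPrev ang q := by
  obtain rfl : q₁ = ⟨Nφ - 1, Nat.sub_lt q.pos Nat.one_pos⟩ := Fin.ext hq₁
  unfold angPrev
  split_ifs with h
  · exact le_rfl
  · linarith [(hang ⟨Nφ - 1, Nat.sub_lt q.pos Nat.one_pos⟩).2,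
      (hang ⟨q - 1, lt_of_le_of_lt (Nat.sub_le _ _) q.isLt⟩).1]

lemma phiLo_lt_phiHi (hmono : StrictMono ang) (hang : ∀ q, ang q ∈ Ico 0 π) (q : Fin Nφ) :
    phiLo ang q < phiHi ang q := by
  have := angPrev_lt hmono hang q
  have := lt_angNext hmono hang q
  unfold phiLo phiHi
  linarith

lemma phiLen_pos (hmono : StrictMono ang) (hang : ∀ q, ang q ∈ Ico 0 π) (q : Fin Nφ) :
    0 < phiLen ang q :=
  sub_pos.mpr (phiLo_lt_phiHi hmono hang q)

lemma phiHi_le_phiLo_of_lt (hmono : Monotone ang) {q q' : Fin Nφ} (h : q < q') :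
    phiHi ang q ≤ phiLo ang q' := by
  have := angNext_le_of_lt hmono h
  have := le_angPrev_of_lt hmono h
  unfold phiLo phiHi
  linarith

lemma Ico_phiLo_phiHi_subset (hmono : Monotone ang) (hang : ∀ q, ang q ∈ Ico 0 π)
    (q q₀ : Fin Nφ) (hq₀ : (q₀ : ℕ) = 0) :
    Ico (phiLo ang q) (phiHi ang q) ⊆ Ico (phiLo ang q₀) (phiLo ang q₀ + π) := by
  set q₁ : Fin Nφ := ⟨Nφ - 1, Nat.sub_lt q.pos Nat.one_pos⟩
  have hq₁ : (q₁ : ℕ) = Nφ - 1 := rfl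
  have h₀ : ang q₀ ≤ ang q := hmono (Fin.le_def.mpr (by omega))
  have h₁ : ang q ≤ ang q₁ := hmono (Fin.le_def.mpr (by omega))
  have hprev : angPrev ang q₀ = ang q₁ - π := by rw [angPrev, if_pos hq₀]
  have := angNext_le hang q q₀ hq₀
  have := le_angPrev hang q q₁ hq₁
  apply Ico_subset_Ico <;> simp only [phiLo, phiHi, hprev] <;> linarith

lemma disjoint_Ico_phiLo_phiHi (hmono : Monotone ang) {q q' : Fin Nφ} (h : q ≠ q') :
    Disjoint (Ico (phiLo ang q) (phiHi ang q)) (Ico (phiLo ang q') (phiHi ang q')) := by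
  rcases lt_or_gt_of_ne h with h | h
  · exact Ico_disjoint_Ico_same.mono_right (Ico_subset_Ico_left (phiHi_le_phiLo_of_lt hmono h))
  · exact (Ico_disjoint_Ico_same.mono_right
      (Ico_subset_Ico_left (phiHi_le_phiLo_of_lt hmono h))).symm

lemma PhiSet_eq (q : Fin Nφ) :
    PhiSet ang q = Ico 0 π ∩ periodize π (Ico (phiLo ang q) (phiHi ang q)) := rfl

lemma measurableSet_PhiSet (q : Fin Nφ) : MeasurableSet (PhiSet ang q) :=
  measurableSet_Ico.inter (measurableSet_periodize measurableSet_Ico)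

lemma measureReal_PhiSet (hmono : StrictMono ang) (hang : ∀ q, ang q ∈ Ico 0 π) (q : Fin Nφ) :
    volume.real (PhiSet ang q) = phiLen ang q := by
  rw [measureReal_def, PhiSet_eq, volume_Ico_inter_periodize pi_pos measurableSet_Ico
    (Ico_phiLo_phiHi_subset hmono.monotone hang q ⟨0, q.pos⟩ rfl), Real.volume_Ico]
  exact ENNReal.toReal_ofReal (phiLen_pos hmono hang q).le

lemma disjoint_PhiSet (hmono : Monotone ang) (hang : ∀ q, ang q ∈ Ico 0 π) {q q' : Fin Nφ}
    (h : q ≠ q') : Disjoint (PhiSet ang q) (PhiSet ang q') :=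
  (disjoint_periodize pi_pos (Ico_phiLo_phiHi_subset hmono hang q ⟨0, q.pos⟩ rfl)
    (Ico_phiLo_phiHi_subset hmono hang q' ⟨0, q.pos⟩ rfl)
    (disjoint_Ico_phiLo_phiHi hmono h)).mono inter_subset_right inter_subset_right

end AngularPixels

lemma Spix_subset_Icc {Ns : ℕ} (p : Fin Ns) : Spix Ns p ⊆ Icc (-1) 1 := by
  have hp : ((p : ℕ) : ℝ) + 1 ≤ Ns := by exact_mod_cast p.isLt
  have hNs : (0 : ℝ) < Ns := by exact_mod_cast p.pos
  refine Ico_subset_Icc_self.trans (Icc_subset_Icc ?_ ?_) <;> unfold sc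
  · have : 0 ≤ (p : ℝ) * (2 / Ns) := by positivity
    linarith
  · have : ((p : ℝ) + 1) * (2 / Ns) ≤ 2 := by
      rw [mul_div_assoc', div_le_iff₀ hNs]; linarith
    linarith

lemma volume_Spix_inter_Ioo {Ns : ℕ} (p : Fin Ns) :
    volume (Spix Ns p ∩ Ioo (-1) 1) = ENNReal.ofReal (2 / Ns) := by
  rw [measure_congr (ae_eq_set_inter (ae_eq_refl (Spix Ns p)) (Ioo_ae_eq_Icc (a := -1) (b := 1))),
    inter_eq_left.mpr (Spix_subset_Icc p), Spix, Real.volume_Ico]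
  ring_nf

lemma setIntegral_prod_indicator_prod_const {α β : Type*} [MeasurableSpace α]
    [MeasurableSpace β] {μ : Measure α} {ν : Measure β} [SFinite ν] {A C : Set α} {B D : Set β}
    (hC : MeasurableSet C) (hD : MeasurableSet D) (c : ℝ) :
    ∫ z in A ×ˢ B, (C ×ˢ D).indicator (fun _ => c) z ∂(μ.prod ν) =
      μ.real (A ∩ C) * ν.real (B ∩ D) * c := by
  rw [setIntegral_indicator (hC.prod hD), setIntegral_const, prod_inter_prod,
    measureReal_prod_prod, smul_eq_mul]

lemma integral_PhiSet_prod_Spix {Nφ Ns : ℕ} {ang : Fin Nφ → ℝ} (hmono : StrictMono ang)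
    (hang : ∀ q, ang q ∈ Ico 0 π) (qh q : Fin Nφ) (p : Fin Ns) :
    ∫ z in PhiSet ang q ×ˢ Spix Ns p,
        (PhiSet ang qh ×ˢ Ioo (-1) 1).indicator (fun _ => 1 / phiLen ang qh) z =
      if q = qh then (2 / Ns : ℝ) else 0 := by
  rw [Measure.volume_eq_prod, setIntegral_prod_indicator_prod_const (measurableSet_PhiSet qh)
    measurableSet_Ioo]
  split_ifs with hq
  · rw [hq, inter_self, measureReal_PhiSet hmono hang, measureReal_def, volume_Spix_inter_Ioo,
      ENNReal.toReal_ofReal (by positivity)]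
    field_simp [(phiLen_pos hmono hang qh).ne']
  · rw [(disjoint_PhiSet hmono.monotone hang hq).inter_eq, measureReal_empty, zero_mul, zero_mul]

lemma max_one_sub_abs_eq (x : ℝ) :
    max (1 - |x|) 0 = max (x + 1) 0 - 2 * max x 0 + max (x - 1) 0 := by
  simp only [max_def, abs_eq_max_neg]
  split_ifs <;> linarith

lemma sum_range_hat {N : ℕ} {u : ℝ} (h₀ : 0 ≤ u) (hN : u ≤ N - 1) :
    ∑ n ∈ Finset.range N, max (1 - |u - n|) 0 = 1 := by
  -- the hat is the second difference of the ramp `max x 0`, so the sum telescopes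
  set D : ℕ → ℝ := fun n => max (u - n + 1) 0 - max (u - n) 0
  have hD : ∀ n : ℕ, max (1 - |u - n|) 0 = D n - D (n + 1) := by
    intro n
    simp only [D, max_one_sub_abs_eq, Nat.cast_succ]
    ring_nf
  rw [Finset.sum_congr rfl fun n _ => hD n, Finset.sum_range_sub']
  simp only [D, Nat.cast_zero, sub_zero]
  rw [max_eq_left (by linarith), max_eq_left h₀, max_eq_right (by linarith),
    max_eq_right (by linarith)]
  ring

lemma pixelWeight_mul_self {δ : ℝ} (hδ : 0 < δ) (t : ℝ) :
    pixelWeight δ t * δ = max (1 - |t / δ|) 0 := by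
  have : max (1 - |t / δ|) 0 = max (δ - |t|) 0 / δ := by
    rw [← max_div_div_right hδ.le, zero_div, abs_div, abs_of_pos hδ, sub_div, div_self hδ.ne']
  rw [this, pixelWeight]
  field_simp

lemma sum_pixelWeight_sc {Ns : ℕ} (hNs : 0 < Ns) {t : ℝ} (ht : |t| ≤ 1 - 2 / Ns / 2) :
    ∑ p : Fin Ns, pixelWeight (2 / Ns) (t - sc Ns p) * (2 / Ns) = 1 := by
  have hδ : (0 : ℝ) < 2 / Ns := by positivity
  rw [Fin.sum_univ_eq_sum_range (fun p => pixelWeight (2 / Ns) (t - sc Ns p) * (2 / Ns))]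
  simp only [pixelWeight_mul_self hδ]
  have hu : ∀ n : ℕ, (t - sc Ns n) / (2 / Ns) = ((t + 1) / (2 / Ns) - 1 / 2) - n := by
    intro n; unfold sc; field_simp; ring
  simp only [hu]
  obtain ⟨ht₁, ht₂⟩ := abs_le.mp ht
  apply sum_range_hat
  · rw [sub_nonneg, le_div_iff₀ hδ]; linarith
  · rw [sub_le_iff_le_add, div_le_iff₀ hδ]
    have : (Ns : ℝ) * (2 / Ns) = 2 := by field_simp
    nlinarith

lemma Xpix_eq_closedBall (Nx : ℕ) (i j : Fin Nx) :
    Xpix Nx i j = Metric.closedBall (xc Nx i j) (2 / Nx / 2) := by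
  ext y
  simp [Xpix, Prod.dist_eq, Real.dist_eq]

lemma interior_Xpix (Nx : ℕ) (i j : Fin Nx) :
    interior (Xpix Nx i j) = Metric.ball (xc Nx i j) (2 / Nx / 2) := by
  have : (0 : ℝ) < Nx := by exact_mod_cast i.pos
  rw [Xpix_eq_closedBall, interior_closedBall _ (by positivity)]

lemma eq_of_abs_sub_sc_lt_of_abs_sub_sc_le {N a b : ℕ} {z : ℝ} (ha : |z - sc N a| < 2 / N / 2)
    (hb : |z - sc N b| ≤ 2 / N / 2) : a = b := by
  have hδ : (0 : ℝ) < 2 / N := by linarith [abs_nonneg (z - sc N a)]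
  obtain ⟨ha₁, ha₂⟩ := abs_lt.mp ha
  obtain ⟨hb₁, hb₂⟩ := abs_le.mp hb
  have hsc : sc N a - sc N b = ((a : ℝ) - b) * (2 / N) := by unfold sc; ring
  have h₁ : ((a : ℝ) - b) * (2 / N) < 1 * (2 / N) := by linarith
  have h₂ : (-1) * (2 / N) < ((a : ℝ) - b) * (2 / N) := by linarith
  have h₁' : (a : ℤ) - b < 1 := by exact_mod_cast lt_of_mul_lt_mul_right h₁ hδ.le
  have h₂' : -1 < (a : ℤ) - b := by exact_mod_cast lt_of_mul_lt_mul_right h₂ hδ.le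
  omega

lemma eq_of_mem_interior_Xpix_of_mem_Xpix {Nx : ℕ} {i j i' j' : Fin Nx} {x : ℝ × ℝ}
    (hx : x ∈ interior (Xpix Nx i j)) (hx' : x ∈ Xpix Nx i' j') : (i', j') = (i, j) := by
  rw [interior_Xpix, Metric.mem_ball, Prod.dist_eq, max_lt_iff, Real.dist_eq, Real.dist_eq] at hx
  obtain ⟨hx₁, hx₂⟩ := hx
  obtain ⟨hx₁', hx₂'⟩ := hx'
  rw [Prod.mk.injEq, Fin.ext_iff, Fin.ext_iff]
  exact ⟨(eq_of_abs_sub_sc_lt_of_abs_sub_sc_le hx₁ hx₁').symm,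
    (eq_of_abs_sub_sc_lt_of_abs_sub_sc_le hx₂ hx₂').symm⟩

lemma convBack_eq_of_mem_interior {Nx Ns Nφ : ℕ} {ang : Fin Nφ → ℝ} (ω : ℝ → ℝ → ℝ)
    (g : ℝ × ℝ → ℝ) {i j : Fin Nx} {x : ℝ × ℝ} (hx : x ∈ interior (Xpix Nx i j)) :
    convBack Nx Ns ang ω g x = ∑ q : Fin Nφ, ∑ p : Fin Ns,
      ω (ang q) (proj (xc Nx i j) (ang q) - sc Ns p) * ∫ z in PhiSet ang q ×ˢ Spix Ns p, g z := by
  rw [convBack, ← Finset.sum_product', Finset.univ_product_univ,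
    Fintype.sum_eq_single (i, j), indicator_of_mem (interior_subset hx), one_mul]
  rintro ⟨i', j'⟩ hne
  rw [indicator_of_notMem fun hx' => hne (eq_of_mem_interior_Xpix_of_mem_Xpix hx hx'), zero_mul]

lemma abs_proj_lt_one {x : ℝ × ℝ} (hx : x ∈ Omg) (φ : ℝ) : |proj x φ| < 1 := by
  have hx : x.1 ^ 2 + x.2 ^ 2 < 1 := hx
  rw [← sq_lt_one_iff_abs_lt_one, proj]
  nlinarith [sin_sq_add_cos_sq φ, sq_nonneg (x.1 * sin φ - x.2 * cos φ)]

lemma radonAdj_indicator_prod_Ioo {A : Set ℝ} (hA : MeasurableSet A) (hAπ : A ⊆ Ico 0 π)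
    (c : ℝ) {x : ℝ × ℝ} (hx : x ∈ Omg) :
    radonAdj ((A ×ˢ Ioo (-1) 1).indicator fun _ => c) x = volume.real A * c := by
  have hslice : ∀ φ, (A ×ˢ Ioo (-1) 1).indicator (fun _ => c) (φ, proj x φ) =
      A.indicator (fun _ => c) φ := by
    intro φ
    have hs : proj x φ ∈ Ioo (-1) 1 := abs_lt.mp (abs_proj_lt_one hx φ)
    by_cases hφ : φ ∈ A
    · rw [indicator_of_mem (mk_mem_prod hφ hs), indicator_of_mem hφ]
    · rw [indicator_of_notMem (fun h => hφ h.1), indicator_of_notMem hφ]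
  simp only [radonAdj, hslice]
  rw [intervalIntegral.integral_of_le pi_pos.le, integral_Ioc_eq_integral_Ioo,
    ← integral_Ico_eq_integral_Ioo, setIntegral_indicator hA, setIntegral_const,
    inter_eq_right.mpr hAπ, smul_eq_mul]

theorem stmt12_general (Nx Nφ Ns : ℕ) (hNs : 0 < Ns)
    (ang : Fin Nφ → ℝ) (hmono : StrictMono ang) (hang : ∀ q, ang q ∈ Set.Ico 0 Real.pi)
    (qh : Fin Nφ) (g : ℝ × ℝ → ℝ)
    (hg : g = fun y => Set.indicator (PhiSet ang qh ×ˢ Set.Ioo (-1 : ℝ) 1)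
      (fun _ => 1 / phiLen ang qh) y) :
    (∀ x ∈ Omg, radonAdj g x = 1)
    ∧ (∀ i j : Fin Nx, |proj (xc Nx i j) (ang qh)| ≤ 1 - (2 / (Ns : ℝ)) / 2 →
        ∀ x ∈ interior (Xpix Nx i j),
          convBack Nx Ns ang (fun _ t => pixelWeight (2 / (Ns : ℝ)) t) g x = 1) := by
  subst hg
  refine ⟨fun x hx => ?_, fun i j hij x hx => ?_⟩
  · rw [radonAdj_indicator_prod_Ioo (measurableSet_PhiSet qh) inter_subset_left _ hx,
      measureReal_PhiSet hmono hang, mul_one_div_cancel (phiLen_pos hmono hang qh).ne']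
  · rw [convBack_eq_of_mem_interior _ _ hx, Fintype.sum_eq_single qh]
    · simpa only [integral_PhiSet_prod_Spix hmono hang, if_pos] using sum_pixelWeight_sc hNs hij
    · intro q hq
      simp only [integral_PhiSet_prod_Spix hmono hang, if_neg hq, mul_zero, Finset.sum_const_zero]

/-- For a fixed discretization, fix `qh ∈ {0,…,N_φ-1}` and let
`g_qh(φ,s) = 1/|Φ_qh|` for `φ ∈ Φ_qh`, `s ∈ (-1,1)`, and `0` otherwise. Then
`(R^* g_qh)(x) = 1` for all `x ∈ Ω`, and for every `i, j` with
`|x_ij · θ_qh| ≤ 1 - δ_s/2` and every `x` in the interior of `X_ij`, the pixel-driven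
backprojection is exact: `(R^pd* g_qh)(x) = 1`. -/
theorem stmt12 (Nx Nφ Ns : ℕ) (hNx : 0 < Nx) (hNφ : 0 < Nφ) (hNs : 0 < Ns)
    (ang : Fin Nφ → ℝ) (hmono : StrictMono ang) (hang : ∀ q, ang q ∈ Set.Ico 0 Real.pi)
    (qh : Fin Nφ) (g : ℝ × ℝ → ℝ)
    (hg : g = fun y => Set.indicator (PhiSet ang qh ×ˢ Set.Ioo (-1 : ℝ) 1)
      (fun _ => 1 / phiLen ang qh) y) :
    (∀ x ∈ Omg, radonAdj g x = 1)
    ∧ (∀ i j : Fin Nx, |proj (xc Nx i j) (ang qh)| ≤ 1 - (2 / (Ns : ℝ)) / 2 →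
        ∀ x ∈ interior (Xpix Nx i j),
          convBack Nx Ns ang (fun _ t => pixelWeight (2 / (Ns : ℝ)) t) g x = 1) :=
  stmt12_general Nx Nφ Ns hNs ang hmono hang qh g hg
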